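/- Let I be a proper graded ideal of R and consider the conditions: (1) I is a graded φ-1-absorbing prime ideal of R; (2) for all nonunits a, b ∈ h(R) with ab ∉ I, (I : ab) = I ∪ (φ(I) : ab); (3) for all nonunits a, b ∈ h(R) with ab ∉ I, either (I : ab) = I or (I : ab) = (φ(I) : ab); (4) for all nonunits a, b ∈ h(R) and every proper graded ideal L of R with abL ⊆ I and abL ⊄ φ(I), either ab ∈ I or L ⊆ I; (5) for every nonunit a ∈ h(R) and all proper graded ideals K, L of R with aKL ⊆ I and aKL ⊄ φ(I), either aK ⊆ I or L ⊆ I; (6) for all proper graded ideals J, K, L of R with JKL ⊆ I and JKL ⊄ φ(I), either JK ⊆ I or L ⊆ I. Then (6) ⇒ (5) ⇒ (4) ⇒ (3) ⇒ (2) ⇒ (1). -/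

import Mathlib

/-!
The first three implications specialise the ideals of the stronger condition: `(6) ⇒ (5)` takes
`J = (a)`, `(5) ⇒ (4)` takes `K = (b)`, and `(4) ⇒ (3)` takes `L = (I : ab)`, which is graded
because `ab` is homogeneous. The last two implications are set bookkeeping, using that both
`I` and `(φ(I) : ab)` lie in `(I : ab)` since `φ(I) ⊆ I`.
-/

/-- The underlying set of an element of `GI(R) ∪ {∅}`: `none` plays the role of `∅`. -/
def phiSet {ι R : Type*} [AddGroup ι] [DecidableEq ι] [CommRing R]
    (𝒜 : ι → AddSubgroup R) [GradedRing 𝒜]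
    (o : Option (HomogeneousIdeal 𝒜)) : Set R :=
  {x | ∃ J ∈ o, x ∈ J}

section

variable {ι R : Type*} [AddGroup ι] [DecidableEq ι] [CommRing R]
  (𝒜 : ι → AddSubgroup R) [GradedRing 𝒜]
  (φ : HomogeneousIdeal 𝒜 → Option (HomogeneousIdeal 𝒜)) (I : HomogeneousIdeal 𝒜)

/-- Condition (1): `I` is a graded `φ`-1-absorbing prime ideal of `R`. -/
def Cond1 : Prop :=
  ∀ a b c : R, SetLike.IsHomogeneousElem 𝒜 a → SetLike.IsHomogeneousElem 𝒜 b →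
    SetLike.IsHomogeneousElem 𝒜 c → ¬IsUnit a → ¬IsUnit b → ¬IsUnit c →
    a * b * c ∈ I.toIdeal → a * b * c ∉ phiSet 𝒜 (φ I) →
    a * b ∈ I.toIdeal ∨ c ∈ I.toIdeal

/-- Condition (2): for all nonunit homogeneous `a, b` with `ab ∉ I`,
`(I : ab) = I ∪ (φ(I) : ab)`. -/
def Cond2 : Prop :=
  ∀ a b : R, SetLike.IsHomogeneousElem 𝒜 a → SetLike.IsHomogeneousElem 𝒜 b →
    ¬IsUnit a → ¬IsUnit b → a * b ∉ I.toIdeal →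
    {x : R | a * b * x ∈ I.toIdeal} =
      (I.toIdeal : Set R) ∪ {x : R | a * b * x ∈ phiSet 𝒜 (φ I)}

/-- Condition (3): for all nonunit homogeneous `a, b` with `ab ∉ I`, either
`(I : ab) = I` or `(I : ab) = (φ(I) : ab)`. -/
def Cond3 : Prop :=
  ∀ a b : R, SetLike.IsHomogeneousElem 𝒜 a → SetLike.IsHomogeneousElem 𝒜 b →
    ¬IsUnit a → ¬IsUnit b → a * b ∉ I.toIdeal →
    {x : R | a * b * x ∈ I.toIdeal} = (I.toIdeal : Set R) ∨
      {x : R | a * b * x ∈ I.toIdeal} = {x : R | a * b * x ∈ phiSet 𝒜 (φ I)}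

/-- Condition (4): for all nonunit homogeneous `a, b` and every proper graded ideal `L`
with `abL ⊆ I` and `abL ⊄ φ(I)`, either `ab ∈ I` or `L ⊆ I`. -/
def Cond4 : Prop :=
  ∀ a b : R, SetLike.IsHomogeneousElem 𝒜 a → SetLike.IsHomogeneousElem 𝒜 b →
    ¬IsUnit a → ¬IsUnit b → ∀ L : HomogeneousIdeal 𝒜, L.toIdeal ≠ ⊤ →
    (∀ x ∈ L.toIdeal, a * b * x ∈ I.toIdeal) →
    ¬(∀ x ∈ L.toIdeal, a * b * x ∈ phiSet 𝒜 (φ I)) →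
    a * b ∈ I.toIdeal ∨ L.toIdeal ≤ I.toIdeal

/-- Condition (5): for every nonunit homogeneous `a` and all proper graded ideals `K, L`
with `aKL ⊆ I` and `aKL ⊄ φ(I)`, either `aK ⊆ I` or `L ⊆ I`. -/
def Cond5 : Prop :=
  ∀ a : R, SetLike.IsHomogeneousElem 𝒜 a → ¬IsUnit a →
    ∀ K L : HomogeneousIdeal 𝒜, K.toIdeal ≠ ⊤ → L.toIdeal ≠ ⊤ →
    (∀ x ∈ K.toIdeal, ∀ y ∈ L.toIdeal, a * x * y ∈ I.toIdeal) →
    ¬(∀ x ∈ K.toIdeal, ∀ y ∈ L.toIdeal, a * x * y ∈ phiSet 𝒜 (φ I)) →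
    (∀ x ∈ K.toIdeal, a * x ∈ I.toIdeal) ∨ L.toIdeal ≤ I.toIdeal

/-- Condition (6): for all proper graded ideals `J, K, L` with `JKL ⊆ I` and
`JKL ⊄ φ(I)`, either `JK ⊆ I` or `L ⊆ I`. -/
def Cond6 : Prop :=
  ∀ J K L : HomogeneousIdeal 𝒜, J.toIdeal ≠ ⊤ → K.toIdeal ≠ ⊤ → L.toIdeal ≠ ⊤ →
    J.toIdeal * K.toIdeal * L.toIdeal ≤ I.toIdeal →
    ¬((J.toIdeal * K.toIdeal * L.toIdeal : Ideal R) : Set R) ⊆ phiSet 𝒜 (φ I) →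
    J.toIdeal * K.toIdeal ≤ I.toIdeal ∨ L.toIdeal ≤ I.toIdeal

end

theorem Ideal.IsHomogeneous.colon_singleton {ι R : Type*} [AddGroup ι] [DecidableEq ι]
    [CommRing R] {𝒜 : ι → AddSubgroup R} [GradedRing 𝒜] {I : Ideal R}
    (hI : I.IsHomogeneous 𝒜) {r : R} (hr : SetLike.IsHomogeneousElem 𝒜 r) :
    (I.colon {r}).IsHomogeneous 𝒜 := by
  obtain ⟨g, hg⟩ := hr
  intro i x hx
  rw [Submodule.mem_colon_singleton, smul_eq_mul] at hx ⊢
  rw [← DirectSum.coe_decompose_mul_add_of_right_mem 𝒜 hg]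
  exact hI (i + g) hx

theorem Ideal.span_singleton_mul_mul_le_iff {R : Type*} [CommRing R] {a : R}
    {K L I : Ideal R} :
    Ideal.span {a} * K * L ≤ I ↔ ∀ x ∈ K, ∀ y ∈ L, a * x * y ∈ I := by
  rw [mul_assoc, Ideal.span_singleton_mul_le_iff]
  refine ⟨fun h x hx y hy => mul_assoc a x y ▸ h _ (Ideal.mul_mem_mul hx hy), fun h z hz => ?_⟩
  exact Submodule.mul_induction_on hz (fun x hx y hy => (mul_assoc a x y).symm ▸ h x hx y hy)
    fun z w hz hw => mul_add a z w ▸ add_mem hz hw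

namespace HomogeneousIdeal

variable {ι R : Type*} [AddGroup ι] [DecidableEq ι] [CommRing R]
  {𝒜 : ι → AddSubgroup R} [GradedRing 𝒜]

def spanSingleton {a : R} (ha : SetLike.IsHomogeneousElem 𝒜 a) : HomogeneousIdeal 𝒜 :=
  ⟨Ideal.span {a}, Ideal.homogeneous_span 𝒜 _ (by rintro x rfl; exact ha)⟩

def colonSingleton (I : HomogeneousIdeal 𝒜) {r : R} (hr : SetLike.IsHomogeneousElem 𝒜 r) :
    HomogeneousIdeal 𝒜 :=
  ⟨I.toIdeal.colon {r}, I.isHomogeneous.colon_singleton hr⟩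

theorem mem_colonSingleton (I : HomogeneousIdeal 𝒜) {r : R}
    (hr : SetLike.IsHomogeneousElem 𝒜 r) {x : R} :
    x ∈ (I.colonSingleton hr).toIdeal ↔ r * x ∈ I.toIdeal := by
  change x ∈ I.toIdeal.colon {r} ↔ _
  rw [Submodule.mem_colon_singleton, smul_eq_mul, mul_comm]

theorem toIdeal_colonSingleton_eq_top_iff (I : HomogeneousIdeal 𝒜) {r : R}
    (hr : SetLike.IsHomogeneousElem 𝒜 r) :
    (I.colonSingleton hr).toIdeal = ⊤ ↔ r ∈ I.toIdeal := by
  rw [Ideal.eq_top_iff_one, mem_colonSingleton, mul_one]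

end HomogeneousIdeal

section Implications

open HomogeneousIdeal

variable {ι R : Type*} [AddGroup ι] [DecidableEq ι] [CommRing R]
  {𝒜 : ι → AddSubgroup R} [GradedRing 𝒜]
  {φ : HomogeneousIdeal 𝒜 → Option (HomogeneousIdeal 𝒜)} {I : HomogeneousIdeal 𝒜}

theorem cond5_of_cond6 (h6 : Cond6 𝒜 φ I) : Cond5 𝒜 φ I := by
  intro a ha hua K L hK hL hI hφI
  have hJKL : ¬((Ideal.span {a} * K.toIdeal * L.toIdeal : Ideal R) : Set R) ⊆
      phiSet 𝒜 (φ I) := by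
    push Not at hφI
    obtain ⟨x, hx, y, hy, hxy⟩ := hφI
    exact fun h => hxy <| h <|
      Ideal.mul_mem_mul (Ideal.mul_mem_mul (Ideal.mem_span_singleton_self a) hx) hy
  exact (h6 (spanSingleton ha) K L (mt Ideal.span_singleton_eq_top.mp hua) hK hL
    (Ideal.span_singleton_mul_mul_le_iff.mpr hI) hJKL).imp_left
    Ideal.span_singleton_mul_le_iff.mp

theorem cond4_of_cond5 (h5 : Cond5 𝒜 φ I) : Cond4 𝒜 φ I := by
  intro a b ha hb hua hub L hL hI hφI
  have hbK : b ∈ Ideal.span {b} := Ideal.mem_span_singleton_self b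
  refine (h5 a ha hua (spanSingleton hb) L (mt Ideal.span_singleton_eq_top.mp hub) hL ?_
    fun h => hφI fun y hy => h b hbK y hy).imp_left fun h => h b hbK
  intro x hx y hy
  obtain ⟨c, rfl⟩ := Ideal.mem_span_singleton'.mp hx
  rw [show a * (c * b) * y = c * (a * b * y) by ring]
  exact I.toIdeal.mul_mem_left c (hI y hy)

theorem cond3_of_cond4 (hφ : phiSet 𝒜 (φ I) ⊆ I.toIdeal) (h4 : Cond4 𝒜 φ I) :
    Cond3 𝒜 φ I := by
  intro a b ha hb hua hub hab
  by_cases heq : {x : R | a * b * x ∈ I.toIdeal} = {x : R | a * b * x ∈ phiSet 𝒜 (φ I)}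
  · exact Or.inr heq
  obtain ⟨x, hxI, hxφ⟩ : ∃ x, a * b * x ∈ I.toIdeal ∧ a * b * x ∉ phiSet 𝒜 (φ I) := by
    by_contra! h
    exact heq (Set.Subset.antisymm h fun x hx => hφ hx)
  set C := I.colonSingleton (ha.mul hb)
  have hC (y : R) : y ∈ C.toIdeal ↔ a * b * y ∈ I.toIdeal := I.mem_colonSingleton _
  rcases h4 a b ha hb hua hub C (mt (I.toIdeal_colonSingleton_eq_top_iff _).mp hab)
    (fun y hy => (hC y).mp hy) (fun h => hxφ (h x ((hC x).mpr hxI))) with h | h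
  · exact absurd h hab
  · exact Or.inl (Set.Subset.antisymm (fun y hy => h ((hC y).mpr hy))
      fun y hy => I.toIdeal.mul_mem_left _ hy)

theorem cond2_of_cond3 (hφ : phiSet 𝒜 (φ I) ⊆ I.toIdeal) (h3 : Cond3 𝒜 φ I) :
    Cond2 𝒜 φ I := by
  intro a b ha hb hua hub hab
  have hI : (I.toIdeal : Set R) ⊆ {x | a * b * x ∈ I.toIdeal} :=
    fun x hx => I.toIdeal.mul_mem_left _ hx
  have hφI : {x | a * b * x ∈ phiSet 𝒜 (φ I)} ⊆ {x | a * b * x ∈ I.toIdeal} :=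
    fun x hx => hφ hx
  rcases h3 a b ha hb hua hub hab with h | h
  · rw [h] at hφI ⊢
    exact (Set.union_eq_self_of_subset_right hφI).symm
  · rw [h] at hI ⊢
    exact (Set.union_eq_self_of_subset_left hI).symm

theorem cond1_of_cond2 (h2 : Cond2 𝒜 φ I) : Cond1 𝒜 φ I := by
  intro a b c ha hb _ hua hub _ habc hφ
  by_cases hab : a * b ∈ I.toIdeal
  · exact Or.inl hab
  have hc : c ∈ {x : R | a * b * x ∈ I.toIdeal} := habc
  rw [h2 a b ha hb hua hub hab] at hc
  exact Or.inr (hc.resolve_right hφ)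

end Implications

theorem stmt5_general {ι R : Type*} [AddGroup ι] [DecidableEq ι] [CommRing R]
    (𝒜 : ι → AddSubgroup R) [GradedRing 𝒜]
    (φ : HomogeneousIdeal 𝒜 → Option (HomogeneousIdeal 𝒜))
    (hφ : ∀ J : HomogeneousIdeal 𝒜, phiSet 𝒜 (φ J) ⊆ (J.toIdeal : Set R))
    (I : HomogeneousIdeal 𝒜) :
    (Cond6 𝒜 φ I → Cond5 𝒜 φ I) ∧ (Cond5 𝒜 φ I → Cond4 𝒜 φ I) ∧
    (Cond4 𝒜 φ I → Cond3 𝒜 φ I) ∧ (Cond3 𝒜 φ I → Cond2 𝒜 φ I) ∧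
    (Cond2 𝒜 φ I → Cond1 𝒜 φ I) :=
  ⟨cond5_of_cond6, cond4_of_cond5, cond3_of_cond4 (hφ I), cond2_of_cond3 (hφ I), cond1_of_cond2⟩

/-- For a proper graded ideal `I` and a function `φ : GI(R) → GI(R) ∪ {∅}` with
`φ(I) ⊆ I`, we have the implications `(6) ⇒ (5) ⇒ (4) ⇒ (3) ⇒ (2) ⇒ (1)` of
Theorem `Theorem 1`. -/
theorem stmt5 {ι R : Type*} [AddGroup ι] [DecidableEq ι] [CommRing R] [Nontrivial R]
    (𝒜 : ι → AddSubgroup R) [GradedRing 𝒜]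
    (φ : HomogeneousIdeal 𝒜 → Option (HomogeneousIdeal 𝒜))
    (hφ : ∀ J : HomogeneousIdeal 𝒜, phiSet 𝒜 (φ J) ⊆ (J.toIdeal : Set R))
    (I : HomogeneousIdeal 𝒜) (hproper : I.toIdeal ≠ ⊤) :
    (Cond6 𝒜 φ I → Cond5 𝒜 φ I) ∧ (Cond5 𝒜 φ I → Cond4 𝒜 φ I) ∧
    (Cond4 𝒜 φ I → Cond3 𝒜 φ I) ∧ (Cond3 𝒜 φ I → Cond2 𝒜 φ I) ∧
    (Cond2 𝒜 φ I → Cond1 𝒜 φ I) :=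
  stmt5_general 𝒜 φ hφ I
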